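/- arXiv:0801.1207 — 2 statements merged into one kernel-verified Lean document; each statement's English description precedes it below -/
import Mathlib

section
/- For the conjecture's case n = 2: let A be a ring with an increasing ℕ-filtration F whose associated graded ring is a domain, and let g ∈ GL_2(F(0)) be a product of at most two elementary 2×2 matrices over A. Then g is a product of elementary matrices over F(0). -/
/-- An increasing exhaustive `ℕ`-filtration on a ring `A` whose associated graded
ring is a (nonzero) domain.  The field `gr_domain` is the elementwise translation of
the statement that the product of two nonzero homogeneous elements of `gr_F A` is
nonzero. -/
structure GrDomainFiltration (A : Type*) [Ring A] where
  F : ℕ → AddSubgroup A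
  mono : Monotone F
  exhaustive : ∀ a : A, ∃ n, a ∈ F n
  one_mem : (1 : A) ∈ F 0
  mul_mem : ∀ {i j : ℕ} {a b : A}, a ∈ F i → b ∈ F j → a * b ∈ F (i + j)
  nontrivial : (0 : A) ≠ 1
  gr_domain : ∀ {i j : ℕ} {a b : A}, a ∈ F i → b ∈ F j → a ≠ 0 → b ≠ 0 →
    (∀ k, k < i → a ∉ F k) → (∀ k, k < j → b ∉ F k) →
    a * b ≠ 0 ∧ ∀ k, k < i + j → a * b ∉ F k

/-- The degree of an element: the least `n` with `a ∈ F n`. -/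
noncomputable def GrDomainFiltration.deg {A : Type*} [Ring A] (fil : GrDomainFiltration A) (a : A) : ℕ :=
  sInf {n | a ∈ fil.F n}

/-!
Over `Fin 2` two elementary matrices sit either at the same position, and then their product is
the elementary matrix whose coefficient is the sum, or at transposed positions, and then the two
coefficients are the off-diagonal entries of the product. Either way `g` factors into elementary
matrices whose coefficients are entries of `g`, and these lie in `F 0`.
-/

namespace Matrix

section

variable {n A : Type*} [DecidableEq n] [Ring A]

def IsElementary (S : Set A) (M : Matrix n n A) : Prop :=
  ∃ i j c, i ≠ j ∧ c ∈ S ∧ M = 1 + single i j c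

theorem IsElementary.mono {S T : Set A} {M : Matrix n n A} (hM : M.IsElementary S)
    (hST : S ⊆ T) : M.IsElementary T := by
  obtain ⟨i, j, c, hij, hc, rfl⟩ := hM
  exact ⟨i, j, c, hij, hST hc, rfl⟩

theorem one_add_single_apply_of_ne {i j : n} (hij : i ≠ j) (c : A) :
    (1 + single i j c) i j = c := by
  simp [one_apply_ne hij]

theorem isElementary_entries_one_add_single {i j : n} (hij : i ≠ j) (c : A) :
    (1 + single i j c).IsElementary (Set.range (Function.uncurry (1 + single i j c))) :=
  ⟨i, j, c, hij, ⟨(i, j), one_add_single_apply_of_ne hij c⟩, rfl⟩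

variable [Fintype n]

theorem one_add_single_mul_one_add_single_same {i j : n} (hij : i ≠ j) (c d : A) :
    (1 + single i j c) * (1 + single i j d) = 1 + single i j (c + d) := by
  rw [add_mul, mul_add, mul_add, single_mul_single_of_ne (h := hij.symm), single_add]
  simp only [one_mul, mul_one, add_zero]
  abel

theorem one_add_single_mul_one_add_single_swap_apply_left {i j : n} (hij : i ≠ j) (c d : A) :
    ((1 + single i j c) * (1 + single j i d)) i j = c := by
  simp [add_mul, mul_add, one_apply_ne hij, single_mul_single_same,
    single_apply_of_ne j i d i j (fun h => hij h.1.symm),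
    single_apply_of_ne i i (c * d) i j (fun h => hij h.2)]

theorem one_add_single_mul_one_add_single_swap_apply_right {i j : n} (hij : i ≠ j) (c d : A) :
    ((1 + single i j c) * (1 + single j i d)) j i = d := by
  simp [add_mul, mul_add, one_apply_ne hij.symm, single_mul_single_same,
    single_apply_of_ne i j c j i (fun h => hij h.1),
    single_apply_of_ne i i (c * d) j i (fun h => hij h.1)]

end

theorem _root_.Fin.two_eq_and_eq_or_eq_swap {i j k l : Fin 2} (hij : i ≠ j) (hkl : k ≠ l) :
    (i = k ∧ j = l) ∨ (i = l ∧ j = k) := by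
  fin_cases i <;> fin_cases j <;> fin_cases k <;> fin_cases l <;> simp_all

variable {A : Type*} [Ring A]

theorem exists_factorization_by_entries_of_mul {M N : Matrix (Fin 2) (Fin 2) A}
    (hM : M.IsElementary Set.univ) (hN : N.IsElementary Set.univ) :
    ∃ L : List (Matrix (Fin 2) (Fin 2) A),
      (∀ E ∈ L, E.IsElementary (Set.range (Function.uncurry (M * N)))) ∧ M * N = L.prod := by
  obtain ⟨i, j, c, hij, -, rfl⟩ := hM
  obtain ⟨k, l, d, hkl, -, rfl⟩ := hN
  rcases Fin.two_eq_and_eq_or_eq_swap hij hkl with ⟨rfl, rfl⟩ | ⟨rfl, rfl⟩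
  · rw [one_add_single_mul_one_add_single_same hij]
    exact ⟨[_], List.forall_mem_singleton.2 (isElementary_entries_one_add_single hij _),
      by simp⟩
  · refine ⟨[1 + single i j c, 1 + single j i d], ?_, by simp⟩
    rintro E (_ | ⟨_, _ | ⟨_, ⟨⟩⟩⟩)
    · exact ⟨i, j, c, hij,
        ⟨(i, j), one_add_single_mul_one_add_single_swap_apply_left hij c d⟩, rfl⟩
    · exact ⟨j, i, d, hij.symm,
        ⟨(j, i), one_add_single_mul_one_add_single_swap_apply_right hij c d⟩, rfl⟩

theorem exists_factorization_by_entries_of_length_le_two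
    {L : List (Matrix (Fin 2) (Fin 2) A)} (hlen : L.length ≤ 2)
    (hL : ∀ M ∈ L, M.IsElementary Set.univ) :
    ∃ L' : List (Matrix (Fin 2) (Fin 2) A),
      (∀ E ∈ L', E.IsElementary (Set.range (Function.uncurry L.prod))) ∧ L.prod = L'.prod := by
  match L, hlen with
  | [], _ => exact ⟨[], by simp, rfl⟩
  | [M], _ =>
    obtain ⟨i, j, c, hij, -, rfl⟩ := hL M (by simp)
    rw [List.prod_singleton]
    exact ⟨[_], List.forall_mem_singleton.2 (isElementary_entries_one_add_single hij c),
      by simp⟩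
  | [M, N], _ =>
    simpa using exists_factorization_by_entries_of_mul (hL M (by simp)) (hL N (by simp))
  | _ :: _ :: _ :: _, hlen => simp at hlen

end Matrix

theorem conjecture_n2_len2_general {A : Type*} [Ring A] (fil : GrDomainFiltration A)
    (g : Matrix (Fin 2) (Fin 2) A)
    (hg : ∀ i j, g i j ∈ fil.F 0)
    (L : List (Matrix (Fin 2) (Fin 2) A))
    (hlen : L.length ≤ 2)
    (hL : ∀ M ∈ L, ∃ (i j : Fin 2) (c : A), i ≠ j ∧ M = 1 + Matrix.single i j c)
    (hprod : g = L.prod) :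
    ∃ L' : List (Matrix (Fin 2) (Fin 2) A),
      (∀ M ∈ L', ∃ (i j : Fin 2) (c : A), i ≠ j ∧ c ∈ fil.F 0 ∧
        M = 1 + Matrix.single i j c) ∧
      g = L'.prod := by
  subst hprod
  have hL_univ : ∀ M ∈ L, M.IsElementary Set.univ := fun M hM ↦
    let ⟨i, j, c, hij, hM⟩ := hL M hM
    ⟨i, j, c, hij, trivial, hM⟩
  obtain ⟨L', hL', hprod'⟩ := 
    Matrix.exists_factorization_by_entries_of_length_le_two hlen hL_univ
  refine ⟨L', fun M hM ↦ (hL' M hM).mono ?_, hprod'⟩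
  rintro _ ⟨⟨i, j⟩, rfl⟩
  exact hg i j

/-- Case `n = 2` of the conjecture, for products of at most two elementary matrices:
if `g` has entries in `F 0`, is invertible over `F 0`, and is a product of at most
two elementary matrices over `A`, then `g` is a product of elementary matrices
with coefficients in `F 0`. -/
theorem conjecture_n2_len2 {A : Type*} [Ring A] (fil : GrDomainFiltration A)
    (g h : Matrix (Fin 2) (Fin 2) A)
    (hg : ∀ i j, g i j ∈ fil.F 0)
    (hh : ∀ i j, h i j ∈ fil.F 0)
    (hinv : g * h = 1 ∧ h * g = 1)
    (L : List (Matrix (Fin 2) (Fin 2) A))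
    (hlen : L.length ≤ 2)
    (hL : ∀ M ∈ L, ∃ (i j : Fin 2) (c : A), i ≠ j ∧ M = 1 + Matrix.single i j c)
    (hprod : g = L.prod) :
    ∃ L' : List (Matrix (Fin 2) (Fin 2) A),
      (∀ M ∈ L', ∃ (i j : Fin 2) (c : A), i ≠ j ∧ c ∈ fil.F 0 ∧
        M = 1 + Matrix.single i j c) ∧
      g = L'.prod :=
  conjecture_n2_len2_general fil g hg L hlen hL hprod
end

section
/- For n ≥ 3, the group E_n(A) generated by elementary matrices is a normal subgroup of GL_n(A) for any commutative ring A (Suslin's normality theorem). -/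
/-!
Conjugating `1 + c eᵢⱼ` by `g` gives `1 + v wᵀ` with `v = g eᵢ` unimodular (`u ⬝ᵥ v = 1` for the
`i`-th row `u` of `g⁻¹`) and `w ⬝ᵥ v = 0`. Suslin's trick writes
`w = ∑ p q, w_p u_q (v_q e_p - v_p e_q)`, a sum of vectors orthogonal to `v`, each vanishing
outside `{p, q}`; since `n ≥ 3` each has a zero coordinate `k`. Transvections `1 + v wᵀ` along a
fixed `v` multiply by adding the `w`'s, so it suffices to treat `w` with `w_k = 0`. Splitting
`v = v' + v_k e_k` with `v'_k = 0`, the factor `1 + v' wᵀ` is the commutator of `1 + v' e_kᵀ` and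
`1 + e_k wᵀ`, and every remaining factor is `1 + x yᵀ` with `x_m y_m = 0` for all `m`, a product of
elementary matrices.
-/

theorem Submonoid.one_add_add_mem {R : Type*} [Semiring R] (S : Submonoid R) {a b : R}
    (hab : a * b = 0) (ha : 1 + a ∈ S) (hb : 1 + b ∈ S) : 1 + (a + b) ∈ S := by
  have : (1 + a) * (1 + b) = 1 + (a + b) := by
    rw [mul_add, add_mul, add_mul, hab]; noncomm_ring
  exact this ▸ S.mul_mem ha hb

theorem Submonoid.one_add_sum_mem {R ι : Type*} [Semiring R] (S : Submonoid R) (s : Finset ι)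
    (N : ι → R) (hN : ∀ x ∈ s, ∀ y ∈ s, N x * N y = 0) (hS : ∀ x ∈ s, 1 + N x ∈ S) :
    1 + ∑ x ∈ s, N x ∈ S := by
  classical
  induction s using Finset.induction with
  | empty => simp [S.one_mem]
  | insert a s ha ih =>
    simp only [Finset.forall_mem_insert] at hN hS
    rw [Finset.sum_insert ha]
    refine S.one_add_add_mem ?_ hS.1 (ih (fun x hx y hy => (hN.2 x hx).2 y hy) hS.2)
    exact Finset.mul_sum s N (N a) ▸ Finset.sum_eq_zero fun y hy => hN.1.2 y hy

/-- `1 + a * b` is the commutator of `1 + a` and `1 + b`. -/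
theorem Submonoid.one_add_mul_mem {R : Type*} [Ring R] (S : Submonoid R) {a b : R}
    (haa : a * a = 0) (hbb : b * b = 0) (hba : b * a = 0)
    (ha : 1 + a ∈ S) (ha' : 1 - a ∈ S) (hb : 1 + b ∈ S) (hb' : 1 - b ∈ S) : 1 + a * b ∈ S := by
  have : (1 + a) * (1 + b) * (1 - a) * (1 - b) = 1 + a * b := by
    simp only [mul_add, add_mul, mul_sub, sub_mul, mul_one, one_mul, mul_assoc, haa, hbb, hba,
      mul_zero, zero_mul]
    noncomm_ring
  exact this ▸ S.mul_mem (S.mul_mem (S.mul_mem ha hb) ha') hb'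

theorem Subgroup.closure_normal_of_conj_mem {G : Type*} [Group G] {s : Set G}
    (h : ∀ g, ∀ x ∈ s, g * x * g⁻¹ ∈ closure s) : (closure s).Normal := by
  have : normalClosure s = closure s := by
    refine le_antisymm (closure_le _ |>.2 fun y hy => ?_)
      (closure_mono Group.subset_conjugatesOfSet)
    obtain ⟨x, hx, hxy⟩ := Group.mem_conjugatesOfSet_iff.1 hy
    obtain ⟨g, rfl⟩ := isConj_iff.1 hxy
    exact h g x hx
  exact this ▸ normalClosure_normal

namespace Matrix

variable {ι A : Type*} [Fintype ι] [DecidableEq ι] [CommRing A]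

variable (ι A) in
def elementarySubgroup : Subgroup (GL ι A) :=
  Subgroup.closure {g | ∃ (i j : ι) (c : A), i ≠ j ∧ (g : Matrix ι ι A) = 1 + single i j c}

variable (ι A) in
/-- `Eₙ(A)` as a submonoid of the matrix ring, so that membership needs no invertibility proof. -/
def elementaryMatrices : Submonoid (Matrix ι ι A) :=
  (elementarySubgroup ι A).toSubmonoid.map (Units.coeHom _)

theorem mem_elementarySubgroup_of_coe_mem {g : GL ι A}
    (hg : (g : Matrix ι ι A) ∈ elementaryMatrices ι A) : g ∈ elementarySubgroup ι A := by
  obtain ⟨h, hh, hhg⟩ := hg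
  exact Units.ext hhg ▸ hh

theorem one_add_single_mem_elementaryMatrices {i j : ι} (hij : i ≠ j) (c : A) :
    1 + single i j c ∈ elementaryMatrices ι A := by
  have hdet : IsUnit (1 + single i j c).det := by
    classical
    exact (det_transvection_of_ne i j hij c).symm ▸ isUnit_one
  obtain ⟨g, hg⟩ := (isUnit_iff_isUnit_det _).2 hdet
  exact ⟨g, Subgroup.subset_closure ⟨i, j, c, hij, hg⟩, hg⟩

theorem one_add_vecMulVec_mem_of_mul_eq_zero {v w : ι → A} (hvw : ∀ m, v m * w m = 0) :
    1 + vecMulVec v w ∈ elementaryMatrices ι A := by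
  have hsum : vecMulVec v w = ∑ pq : ι × ι, single pq.1 pq.2 (v pq.1 * w pq.2) := by
    rw [Fintype.sum_prod_type]
    exact matrix_eq_sum_single (vecMulVec v w)
  rw [hsum]
  refine Submonoid.one_add_sum_mem _ _ _ (fun ⟨p, q⟩ _ ⟨p', q'⟩ _ => ?_) (fun ⟨p, q⟩ _ => ?_)
  · by_cases hq : q = p'
    · subst hq
      rw [single_mul_single_same, mul_assoc, ← mul_assoc (w q), mul_comm (w q), hvw, zero_mul,
        mul_zero, single_zero]
    · exact single_mul_single_of_ne (h := hq) ..
  · by_cases hpq : p = q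
    · subst hpq
      simp [hvw]
    · exact one_add_single_mem_elementaryMatrices hpq _

theorem one_add_vecMulVec_single_mem {v : ι → A} {k : ι} (hv : v k = 0) (c : A) :
    1 + vecMulVec v (Pi.single k c) ∈ elementaryMatrices ι A :=
  one_add_vecMulVec_mem_of_mul_eq_zero fun m => by
    by_cases hm : m = k <;> simp [hm, hv]

theorem one_add_single_vecMulVec_mem {w : ι → A} {k : ι} (hw : w k = 0) (c : A) :
    1 + vecMulVec (Pi.single k c) w ∈ elementaryMatrices ι A :=
  one_add_vecMulVec_mem_of_mul_eq_zero fun m => by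
    by_cases hm : m = k <;> simp [hm, hw]

theorem one_add_vecMulVec_mem_of_apply_eq_zero_of_apply_eq_zero {v w : ι → A} {k : ι}
    (hv : v k = 0) (hw : w k = 0) (hwv : w ⬝ᵥ v = 0) :
    1 + vecMulVec v w ∈ elementaryMatrices ι A := by
  set e : ι → A := Pi.single k 1
  have hab : vecMulVec v e * vecMulVec e w = vecMulVec v w := by
    simp [e, vecMulVec_mul_vecMulVec]
  rw [← hab]
  refine Submonoid.one_add_mul_mem _ ?_ ?_ ?_ (one_add_vecMulVec_single_mem hv 1) ?_
    (one_add_single_vecMulVec_mem hw 1) ?_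
  · simp [e, vecMulVec_mul_vecMulVec, hv]
  · simp [e, vecMulVec_mul_vecMulVec, hw]
  · simp [vecMulVec_mul_vecMulVec, hwv]
  · rw [sub_eq_add_neg, ← vecMulVec_neg, ← Pi.single_neg]
    exact one_add_vecMulVec_single_mem hv (-1)
  · rw [sub_eq_add_neg, ← neg_vecMulVec, ← Pi.single_neg]
    exact one_add_single_vecMulVec_mem hw (-1)

theorem one_add_vecMulVec_mem_of_apply_eq_zero {v w : ι → A} {k : ι} (hw : w k = 0)
    (hwv : w ⬝ᵥ v = 0) : 1 + vecMulVec v w ∈ elementaryMatrices ι A := by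
  set v' := Function.update v k 0
  have hv : v = v' + Pi.single k (v k) := by
    ext m
    by_cases hm : m = k <;> simp [hm, v']
  have hwk : w ⬝ᵥ Pi.single k (v k) = 0 := by simp [hw]
  have hwv' : w ⬝ᵥ v' = 0 := by rwa [hv, dotProduct_add, hwk, add_zero] at hwv
  rw [hv, add_vecMulVec]
  refine Submonoid.one_add_add_mem _ ?_ ?_ (one_add_single_vecMulVec_mem hw _)
  · simp [vecMulVec_mul_vecMulVec, hwk]
  · exact one_add_vecMulVec_mem_of_apply_eq_zero_of_apply_eq_zero (by simp [v']) hw hwv'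

theorem one_add_vecMulVec_mem (h3 : 3 ≤ Fintype.card ι) {u v w : ι → A} (huv : u ⬝ᵥ v = 1)
    (hwv : w ⬝ᵥ v = 0) : 1 + vecMulVec v w ∈ elementaryMatrices ι A := by
  -- the Koszul relations `w_p u_q (v_q e_p - v_p e_q)`, which sum to `(u ⬝ᵥ v) w - (w ⬝ᵥ v) u`
  set f : ι × ι → ι → A := fun pq =>
    (u pq.2 * v pq.2) • Pi.single pq.1 (w pq.1) - (w pq.1 * v pq.1) • Pi.single pq.2 (u pq.2)
  have hfv : ∀ pq, f pq ⬝ᵥ v = 0 := fun pq => by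
    simp only [f, sub_dotProduct, smul_dotProduct, single_dotProduct, smul_eq_mul]
    ring
  have hfw : ∑ pq, f pq = w := by
    simp only [f, Fintype.sum_prod_type, Finset.sum_sub_distrib, ← Finset.sum_smul,
      ← Finset.smul_sum, Finset.univ_sum_single]
    change (u ⬝ᵥ v) • w - (w ⬝ᵥ v) • u = w
    rw [huv, hwv, one_smul, zero_smul, sub_zero]
  have hsum : vecMulVec v w = ∑ pq, vecMulVec v (f pq) := by
    conv_lhs => rw [← hfw]
    ext i j
    simp only [vecMulVec_apply, Matrix.sum_apply, Finset.sum_apply, Finset.mul_sum]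
  rw [hsum]
  refine Submonoid.one_add_sum_mem _ _ _ (fun x _ y _ => ?_) (fun ⟨p, q⟩ _ => ?_)
  · rw [vecMulVec_mul_vecMulVec, hfv, zero_smul, vecMulVec_zero]
  · obtain ⟨k, hkp, hkq⟩ := ENat.exists_ne_ne_of_three_le (by simpa using h3) p q
    exact one_add_vecMulVec_mem_of_apply_eq_zero (k := k) (by simp [f, hkp, hkq]) (hfv _)

theorem conj_mem_elementarySubgroup (h3 : 3 ≤ Fintype.card ι) (g : GL ι A) {x : GL ι A}
    {i j : ι} (hij : i ≠ j) {c : A} (hx : (x : Matrix ι ι A) = 1 + single i j c) :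
    g * x * g⁻¹ ∈ elementarySubgroup ι A := by
  apply mem_elementarySubgroup_of_coe_mem
  have hsingle : single i j c = vecMulVec (Pi.single i 1) (Pi.single j c) := by
    ext a b
    simp only [single_apply, vecMulVec_apply, Pi.single_apply, ite_and, ite_mul, one_mul, zero_mul,
      eq_comm]
  have hconj : ((g * x * g⁻¹ : GL ι A) : Matrix ι ι A)
      = 1 + vecMulVec ((g : Matrix ι ι A) *ᵥ Pi.single i 1) (Pi.single j c ᵥ* ↑g⁻¹) := by
    rw [Units.val_mul, Units.val_mul, hx, mul_add, mul_one, add_mul, ← Units.val_mul,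
      mul_inv_cancel, Units.val_one, hsingle, mul_vecMulVec, vecMulVec_mul]
  have hinv : ∀ y : ι → A, y ᵥ* ↑g⁻¹ ⬝ᵥ (g : Matrix ι ι A) *ᵥ Pi.single i 1 = y i := by
    intro y
    rw [dotProduct_mulVec, vecMul_vecMul, ← Units.val_mul, inv_mul_cancel, Units.val_one,
      vecMul_one, dotProduct_single, mul_one]
  rw [hconj]
  exact one_add_vecMulVec_mem h3 ((hinv _).trans (Pi.single_eq_same i 1))
    ((hinv _).trans (by simp [hij]))

end Matrix

/-- Suslin's normality theorem: for `n ≥ 3` and `A` a commutative ring, the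
subgroup `Eₙ(A)` of `GLₙ(A)` generated by elementary matrices is normal. -/
theorem suslin_normality {A : Type*} [CommRing A] {n : ℕ} (hn : 3 ≤ n) :
    (Subgroup.closure {g : Matrix.GeneralLinearGroup (Fin n) A |
      ∃ (i j : Fin n) (c : A), i ≠ j ∧
        (g : Matrix (Fin n) (Fin n) A) = 1 + Matrix.single i j c}).Normal :=
  Subgroup.closure_normal_of_conj_mem fun g _ ⟨_, _, _, hij, hx⟩ =>
    Matrix.conj_mem_elementarySubgroup (by simpa using hn) g hij hx
end
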